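/- Let A ∈ ℝ^{n×n} and C ∈ ℝ^{m×n}, and for T > 0 set R_T = ∫_0^T e^{tAᵀ} Cᵀ C e^{tA} dt. The following are equivalent: (i) the pair (A,C) is observable; (ii) R_T is invertible for some T > 0; (iii) R_T is invertible for all T > 0; (iv) the mn × n matrix obtained by stacking C, CA, …, CA^{n−1} has rank n. -/

import Mathlib

open MeasureTheory Matrix NormedSpace

/-- The pair `(A,C)` is observable: for every `x0 ≠ 0` there exists `τ > 0` with
`C e^{τA} x0 ≠ 0`. -/
def IsObservable {n m : ℕ} (A : Matrix (Fin n) (Fin n) ℝ)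
    (C : Matrix (Fin m) (Fin n) ℝ) : Prop :=
  ∀ x0 : Fin n → ℝ, x0 ≠ 0 → ∃ τ : ℝ, 0 < τ ∧ C.mulVec ((NormedSpace.exp (τ • A)).mulVec x0) ≠ 0

/-- The observability Gramian `R_T = ∫_0^T e^{tAᵀ} Cᵀ C e^{tA} dt`. -/
noncomputable def obsGramian {n m : ℕ} (A : Matrix (Fin n) (Fin n) ℝ)
    (C : Matrix (Fin m) (Fin n) ℝ) (T : ℝ) : Matrix (Fin n) (Fin n) ℝ :=
  Matrix.of fun i j => ∫ t in (0:ℝ)..T, (NormedSpace.exp (t • Aᵀ) * Cᵀ * C * NormedSpace.exp (t • A)) i j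


section Aux
open Polynomial
variable {n m : ℕ}

variable {n m : ℕ}

/-- The continuous linear map `M ↦ (D * M) *ᵥ x`. -/
noncomputable def matCLM (D : Matrix (Fin m) (Fin n) ℝ) (x : Fin n → ℝ) :
    Matrix (Fin n) (Fin n) ℝ →L[ℝ] (Fin m → ℝ) :=
  LinearMap.toContinuousLinearMap
    { toFun := fun M => (D * M).mulVec x
      map_add' := fun M N => by simp [Matrix.mul_add, Matrix.add_mulVec]
      map_smul' := fun c M => by simp [Matrix.mul_smul, Matrix.smul_mulVec] }

lemma matCLM_apply (D : Matrix (Fin m) (Fin n) ℝ) (x : Fin n → ℝ) (M : Matrix (Fin n) (Fin n) ℝ) :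
    matCLM D x M = (D * M).mulVec x := rfl

lemma cont_exp (A : Matrix (Fin n) (Fin n) ℝ) : Continuous fun t : ℝ => NormedSpace.exp (t • A) := by
  letI : SeminormedRing (Matrix (Fin n) (Fin n) ℝ) := Matrix.linftyOpSemiNormedRing
  letI : NormedRing (Matrix (Fin n) (Fin n) ℝ) := Matrix.linftyOpNormedRing
  letI : NormedAlgebra ℝ (Matrix (Fin n) (Fin n) ℝ) := Matrix.linftyOpNormedAlgebra
  exact continuous_iff_continuousAt.2 fun t => (hasDerivAt_exp_smul_const (𝕂 := ℝ) A t).continuousAt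

lemma hasDerivAt_aux (A : Matrix (Fin n) (Fin n) ℝ) (D : Matrix (Fin m) (Fin n) ℝ)
    (x : Fin n → ℝ) (t : ℝ) :
    HasDerivAt (fun s : ℝ => (D * NormedSpace.exp (s • A)).mulVec x)
      ((D * (NormedSpace.exp (t • A) * A)).mulVec x) t := by
  letI : SeminormedRing (Matrix (Fin n) (Fin n) ℝ) := Matrix.linftyOpSemiNormedRing
  letI : NormedRing (Matrix (Fin n) (Fin n) ℝ) := Matrix.linftyOpNormedRing
  letI : NormedAlgebra ℝ (Matrix (Fin n) (Fin n) ℝ) := Matrix.linftyOpNormedAlgebra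
  have h := hasDerivAt_exp_smul_const (𝕂 := ℝ) A t
  have h2 := ((matCLM D x).hasFDerivAt (x := NormedSpace.exp (t • A))).comp_hasDerivAt t h
  exact h2

lemma exp_mulVec_eq_zero (A : Matrix (Fin n) (Fin n) ℝ) (C : Matrix (Fin m) (Fin n) ℝ)
    (x : Fin n → ℝ) (h : ∀ k : ℕ, C.mulVec ((A ^ k).mulVec x) = 0) (t : ℝ) :
    C.mulVec ((NormedSpace.exp (t • A)).mulVec x) = 0 := by
  letI : SeminormedRing (Matrix (Fin n) (Fin n) ℝ) := Matrix.linftyOpSemiNormedRing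
  letI : NormedRing (Matrix (Fin n) (Fin n) ℝ) := Matrix.linftyOpNormedRing
  letI : NormedAlgebra ℝ (Matrix (Fin n) (Fin n) ℝ) := Matrix.linftyOpNormedAlgebra
  have hsum : Summable fun k : ℕ => ((k.factorial : ℝ))⁻¹ • (t • A) ^ k :=
    expSeries_summable' (𝕂 := ℝ) (t • A)
  have hexp : NormedSpace.exp (t • A) = ∑' k : ℕ, ((k.factorial : ℝ))⁻¹ • (t • A) ^ k := by
    rw [exp_eq_tsum (𝕂 := ℝ)]
  rw [Matrix.mulVec_mulVec, ← matCLM_apply C x, hexp, (matCLM C x).map_tsum hsum]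
  convert tsum_zero with k
  rw [ContinuousLinearMap.map_smul, matCLM_apply, _root_.smul_pow, Matrix.mul_smul,
    Matrix.smul_mulVec, ← Matrix.mulVec_mulVec, h k, smul_zero, smul_zero]



lemma all_pow_of_lt (A : Matrix (Fin n) (Fin n) ℝ) (C : Matrix (Fin m) (Fin n) ℝ)
    (x : Fin n → ℝ) (h : ∀ k < n, C.mulVec ((A ^ k).mulVec x) = 0) (k : ℕ) :
    C.mulVec ((A ^ k).mulVec x) = 0 := by
  rcases Nat.eq_zero_or_pos n with hn | hn
  · subst hn
    have : x = 0 := Subsingleton.elim _ _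
    simp [this, Matrix.mulVec_zero]
  have hchar : (Matrix.charpoly A).Monic := Matrix.charpoly_monic A
  have hA := Matrix.pow_eq_aeval_mod_charpoly A k
  set p := X ^ k %ₘ A.charpoly with hp
  have hdeg : p.degree < (Matrix.charpoly A).degree := Polynomial.degree_modByMonic_lt _ hchar
  have hdeg' : p.natDegree < n := by
    have hd : (Matrix.charpoly A).degree = (n : ℕ) := by
      have := Matrix.charpoly_degree_eq_dim A
      simpa using this
    rcases eq_or_ne p 0 with h0 | h0
    · simpa [h0] using hn
    · have := Polynomial.natDegree_lt_iff_degree_lt h0 |>.mpr (by rw [← hd] at *; exact_mod_cast hdeg)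
      exact this
  rw [hA, Polynomial.aeval_eq_sum_range' hdeg']
  rw [Matrix.mulVec_mulVec, ← matCLM_apply C x, map_sum]
  refine Finset.sum_eq_zero fun i hi => ?_
  rw [_root_.map_smul, matCLM_apply, ← Matrix.mulVec_mulVec, h i (Finset.mem_range.mp hi), smul_zero]


lemma exp_smul_comm (A : Matrix (Fin n) (Fin n) ℝ) (s : ℝ) (B : Matrix (Fin n) (Fin n) ℝ)
    (hB : Commute A B) : NormedSpace.exp (s • A) * B = B * NormedSpace.exp (s • A) :=
  (((hB.symm.smul_right s)).exp_right).symm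

lemma key_vanish (A : Matrix (Fin n) (Fin n) ℝ) (C : Matrix (Fin m) (Fin n) ℝ)
    (T : ℝ) (hT : 0 < T) (x : Fin n → ℝ)
    (h : ∀ t ∈ Set.Ioo (0:ℝ) T, (C * NormedSpace.exp (t • A)).mulVec x = 0) (k : ℕ) :
    C.mulVec ((A ^ k).mulVec x) = 0 := by
  have step : ∀ k, ∀ t ∈ Set.Ioo (0:ℝ) T, (C * A ^ k * NormedSpace.exp (t • A)).mulVec x = 0 := by
    intro k
    induction k with
    | zero => simpa using h
    | succ k ih =>
      intro t ht
      have h1 : HasDerivAt (fun s : ℝ => (C * A ^ k * NormedSpace.exp (s • A)).mulVec x)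
          ((C * A ^ k * (NormedSpace.exp (t • A) * A)).mulVec x) t := hasDerivAt_aux A _ x t
      have heq : (fun s : ℝ => (C * A ^ k * NormedSpace.exp (s • A)).mulVec x) =ᶠ[nhds t]
          (fun _ => (0 : Fin m → ℝ)) :=
        Filter.eventually_of_mem (isOpen_Ioo.mem_nhds ht) (fun s hs => ih s hs)
      have h2 : HasDerivAt (fun s : ℝ => (C * A ^ k * NormedSpace.exp (s • A)).mulVec x) 0 t :=
        (hasDerivAt_const t (0 : Fin m → ℝ)).congr_of_eventuallyEq heq
      have hu := h1.unique h2
      have hc : NormedSpace.exp (t • A) * A = A * NormedSpace.exp (t • A) := exp_smul_comm A t A (Commute.refl A)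
      calc (C * A ^ (k+1) * NormedSpace.exp (t • A)).mulVec x
          = (C * A ^ k * (NormedSpace.exp (t • A) * A)).mulVec x := by
            rw [hc, pow_succ]; simp only [Matrix.mul_assoc]
      _ = 0 := hu
  set t0 := T / 2 with ht0def
  have ht0 : t0 ∈ Set.Ioo (0:ℝ) T := ⟨by positivity, by linarith⟩
  set y := (NormedSpace.exp (t0 • A)).mulVec x with hy
  have hyk : ∀ j, C.mulVec ((A ^ j).mulVec y) = 0 := by
    intro j
    simpa only [hy, Matrix.mulVec_mulVec, Matrix.mul_assoc] using step j t0 ht0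
  have hz : ∀ j, C.mulVec ((A ^ j).mulVec ((A ^ k).mulVec y)) = 0 := by
    intro j
    have hjk := hyk (j + k)
    rw [pow_add] at hjk
    simpa only [Matrix.mulVec_mulVec, Matrix.mul_assoc] using hjk
  have hE := exp_mulVec_eq_zero A C ((A ^ k).mulVec y) hz (-t0)
  have hcomm : NormedSpace.exp ((-t0) • A) * A ^ k = A ^ k * NormedSpace.exp ((-t0) • A) :=
    exp_smul_comm A (-t0) (A ^ k) ((Commute.refl A).pow_right k)
  have hx : (NormedSpace.exp ((-t0) • A)).mulVec y = x := by
    rw [hy, Matrix.mulVec_mulVec, ← Matrix.exp_add_of_commute]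
    · rw [← add_smul, neg_add_cancel, zero_smul, exp_zero, Matrix.one_mulVec]
    · exact ((Commute.refl A).smul_left (-t0)).smul_right t0
  have : C.mulVec ((A ^ k).mulVec x) =
      C.mulVec ((A ^ k).mulVec ((NormedSpace.exp ((-t0) • A)).mulVec y)) := by rw [hx]
  rw [this]
  simp only [Matrix.mulVec_mulVec, Matrix.mul_assoc] at hE ⊢
  rw [← hcomm]
  exact hE

lemma Mt_eq (A : Matrix (Fin n) (Fin n) ℝ) (C : Matrix (Fin m) (Fin n) ℝ) (t : ℝ) :
    NormedSpace.exp (t • Aᵀ) * Cᵀ * C * NormedSpace.exp (t • A)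
      = (C * NormedSpace.exp (t • A))ᵀ * (C * NormedSpace.exp (t • A)) := by
  rw [show t • Aᵀ = (t • A)ᵀ from (Matrix.transpose_smul t A).symm, Matrix.exp_transpose,
    Matrix.transpose_mul]
  simp only [Matrix.mul_assoc]

lemma cont_entry (A : Matrix (Fin n) (Fin n) ℝ) (C : Matrix (Fin m) (Fin n) ℝ)
    (i j : Fin n) :
    Continuous fun t : ℝ => (NormedSpace.exp (t • Aᵀ) * Cᵀ * C * NormedSpace.exp (t • A)) i j := by
  have h : Continuous fun t : ℝ => NormedSpace.exp (t • Aᵀ) * Cᵀ * C * NormedSpace.exp (t • A) :=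
    (((cont_exp Aᵀ).matrix_mul continuous_const).matrix_mul continuous_const).matrix_mul
      (cont_exp A)
  exact (continuous_apply j).comp ((continuous_apply i).comp h)

lemma cont_mvx (A : Matrix (Fin n) (Fin n) ℝ) (C : Matrix (Fin m) (Fin n) ℝ)
    (x : Fin n → ℝ) (i : Fin n) :
    Continuous fun t : ℝ => ((NormedSpace.exp (t • Aᵀ) * Cᵀ * C * NormedSpace.exp (t • A)).mulVec x) i := by
  simp only [Matrix.mulVec, dotProduct]
  exact continuous_finset_sum _ fun j _ => (cont_entry A C i j).mul continuous_const

lemma gram_mulVec (A : Matrix (Fin n) (Fin n) ℝ) (C : Matrix (Fin m) (Fin n) ℝ)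
    (T : ℝ) (x : Fin n → ℝ) (i : Fin n) :
    (obsGramian A C T).mulVec x i
      = ∫ t in (0:ℝ)..T, ((NormedSpace.exp (t • Aᵀ) * Cᵀ * C * NormedSpace.exp (t • A)).mulVec x) i := by
  simp only [Matrix.mulVec, dotProduct, obsGramian, Matrix.of_apply]
  calc ∑ j, (∫ t in (0:ℝ)..T, (NormedSpace.exp (t • Aᵀ) * Cᵀ * C * NormedSpace.exp (t • A)) i j) * x j
      = ∑ j, ∫ t in (0:ℝ)..T, (NormedSpace.exp (t • Aᵀ) * Cᵀ * C * NormedSpace.exp (t • A)) i j * x j :=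
        Finset.sum_congr rfl fun j _ => (intervalIntegral.integral_mul_const _ _).symm
    _ = ∫ t in (0:ℝ)..T, ∑ j, (NormedSpace.exp (t • Aᵀ) * Cᵀ * C * NormedSpace.exp (t • A)) i j * x j :=
        (intervalIntegral.integral_finset_sum fun j _ =>
          ((cont_entry A C i j).mul continuous_const).intervalIntegrable _ _).symm

lemma gram_dot (A : Matrix (Fin n) (Fin n) ℝ) (C : Matrix (Fin m) (Fin n) ℝ)
    (T : ℝ) (x : Fin n → ℝ) :
    x ⬝ᵥ (obsGramian A C T).mulVec x
      = ∫ t in (0:ℝ)..T,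
          ((C * NormedSpace.exp (t • A)).mulVec x) ⬝ᵥ ((C * NormedSpace.exp (t • A)).mulVec x) := by
  have hpt : ∀ t : ℝ, x ⬝ᵥ ((NormedSpace.exp (t • Aᵀ) * Cᵀ * C * NormedSpace.exp (t • A)).mulVec x)
      = ((C * NormedSpace.exp (t • A)).mulVec x) ⬝ᵥ ((C * NormedSpace.exp (t • A)).mulVec x) := by
    intro t
    rw [Mt_eq, ← Matrix.mulVec_mulVec, Matrix.dotProduct_mulVec, Matrix.vecMul_transpose]
  calc x ⬝ᵥ (obsGramian A C T).mulVec x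
      = ∑ i, x i * ∫ t in (0:ℝ)..T, ((NormedSpace.exp (t • Aᵀ) * Cᵀ * C * NormedSpace.exp (t • A)).mulVec x) i := by
        simp only [dotProduct]
        exact Finset.sum_congr rfl fun i _ => by rw [gram_mulVec]
    _ = ∑ i, ∫ t in (0:ℝ)..T, x i * ((NormedSpace.exp (t • Aᵀ) * Cᵀ * C * NormedSpace.exp (t • A)).mulVec x) i :=
        Finset.sum_congr rfl fun i _ => (intervalIntegral.integral_const_mul _ _).symm
    _ = ∫ t in (0:ℝ)..T, ∑ i, x i * ((NormedSpace.exp (t • Aᵀ) * Cᵀ * C * NormedSpace.exp (t • A)).mulVec x) i :=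
        (intervalIntegral.integral_finset_sum fun i _ =>
          (continuous_const.mul (cont_mvx A C x i)).intervalIntegrable _ _).symm
    _ = ∫ t in (0:ℝ)..T,
          ((C * NormedSpace.exp (t • A)).mulVec x) ⬝ᵥ ((C * NormedSpace.exp (t • A)).mulVec x) := by
        refine intervalIntegral.integral_congr fun t _ => ?_
        rw [← hpt t]; rfl

lemma gram_mulVec_zero (A : Matrix (Fin n) (Fin n) ℝ) (C : Matrix (Fin m) (Fin n) ℝ)
    (T : ℝ) (x : Fin n → ℝ)
    (hE : ∀ t : ℝ, C.mulVec ((NormedSpace.exp (t • A)).mulVec x) = 0) :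
    (obsGramian A C T).mulVec x = 0 := by
  funext i
  rw [Pi.zero_apply, gram_mulVec]
  have hz : ∀ t : ℝ, ((NormedSpace.exp (t • Aᵀ) * Cᵀ * C * NormedSpace.exp (t • A)).mulVec x) i = 0 := by
    intro t
    have hBx : (C * NormedSpace.exp (t • A)).mulVec x = 0 := by
      rw [← Matrix.mulVec_mulVec]; exact hE t
    rw [Mt_eq, ← Matrix.mulVec_mulVec, hBx, Matrix.mulVec_zero, Pi.zero_apply]
  simp only [hz, intervalIntegral.integral_zero]

lemma gram_zero_iff (A : Matrix (Fin n) (Fin n) ℝ) (C : Matrix (Fin m) (Fin n) ℝ)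
    (T : ℝ) (hT : 0 < T) (x : Fin n → ℝ) :
    (obsGramian A C T).mulVec x = 0 ↔ ∀ k, C.mulVec ((A ^ k).mulVec x) = 0 := by
  constructor
  · intro hg
    have hdot : (0:ℝ) = ∫ t in (0:ℝ)..T,
        ((C * NormedSpace.exp (t • A)).mulVec x) ⬝ᵥ ((C * NormedSpace.exp (t • A)).mulVec x) := by
      rw [← gram_dot, hg, dotProduct_zero]
    have hfc : Continuous fun t : ℝ => (C * NormedSpace.exp (t • A)).mulVec x :=
      (continuous_const.matrix_mul (cont_exp A)).matrix_mulVec continuous_const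
    have hφc : Continuous fun t : ℝ =>
        ((C * NormedSpace.exp (t • A)).mulVec x) ⬝ᵥ ((C * NormedSpace.exp (t • A)).mulVec x) :=
      hfc.dotProduct hfc
    have hφ0 : ∀ t : ℝ, 0 ≤ ((C * NormedSpace.exp (t • A)).mulVec x) ⬝ᵥ ((C * NormedSpace.exp (t • A)).mulVec x) :=
      fun t => Finset.sum_nonneg fun j _ => mul_self_nonneg _
    have hzero : ∀ t ∈ Set.Ioo (0:ℝ) T, (C * NormedSpace.exp (t • A)).mulVec x = 0 := by
      intro t ht
      by_contra hne
      have hp : 0 < ((C * NormedSpace.exp (t • A)).mulVec x) ⬝ᵥ ((C * NormedSpace.exp (t • A)).mulVec x) :=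
        lt_of_le_of_ne (hφ0 t) fun h0 => hne (dotProduct_self_eq_zero.mp h0.symm)
      have hpos := intervalIntegral.integral_pos hT hφc.continuousOn
        (fun s _ => hφ0 s) ⟨t, ⟨ht.1.le, ht.2.le⟩, hp⟩
      rw [← hdot] at hpos
      exact lt_irrefl _ hpos
    exact fun k => key_vanish A C T hT x hzero k
  · intro hQ
    exact gram_mulVec_zero A C T x fun t => exp_mulVec_eq_zero A C x hQ t


end Aux

/-- The following are equivalent: (i) `(A,C)` is observable;
(ii) `R_T` is invertible for some `T > 0`; (iii) `R_T` is invertible for all `T > 0`;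
(iv) the stacked matrix `[C; CA; …; CA^{n−1}]` has rank `n`. -/
theorem statement_8 (n m : ℕ) (A : Matrix (Fin n) (Fin n) ℝ)
    (C : Matrix (Fin m) (Fin n) ℝ) :
    (IsObservable A C ↔ ∃ T : ℝ, 0 < T ∧ IsUnit (obsGramian A C T).det) ∧
    (IsObservable A C ↔ ∀ T : ℝ, 0 < T → IsUnit (obsGramian A C T).det) ∧
    (IsObservable A C ↔
      (Matrix.of fun (ij : Fin n × Fin m) (k : Fin n) =>
        (C * A ^ (ij.1 : ℕ)) ij.2 k).rank = n) := by
  have hQP : ∀ x : Fin n → ℝ, (∀ k, C.mulVec ((A ^ k).mulVec x) = 0) ↔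
      (∀ k < n, C.mulVec ((A ^ k).mulVec x) = 0) :=
    fun x => ⟨fun h k _ => h k, fun h k => all_pow_of_lt A C x h k⟩
  have hobs : IsObservable A C ↔
      ∀ x : Fin n → ℝ, x ≠ 0 → ¬ (∀ k, C.mulVec ((A ^ k).mulVec x) = 0) := by
    constructor
    · intro hO x hx hQ
      obtain ⟨τ, _, hne⟩ := hO x hx
      exact hne (exp_mulVec_eq_zero A C x hQ τ)
    · intro h x hx
      by_contra hno
      push_neg at hno
      refine absurd (fun k => key_vanish A C 1 one_pos x (fun t ht => ?_) k) (h x hx)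
      rw [← Matrix.mulVec_mulVec]
      exact hno t ht.1
  have hgram : ∀ T : ℝ, 0 < T → (IsUnit (obsGramian A C T).det ↔
      ∀ x : Fin n → ℝ, x ≠ 0 → ¬ (∀ k, C.mulVec ((A ^ k).mulVec x) = 0)) := by
    intro T hT
    rw [isUnit_iff_ne_zero]
    constructor
    · intro hne x hx hQ
      exact hne (Matrix.exists_mulVec_eq_zero_iff.mp
        ⟨x, hx, (gram_zero_iff A C T hT x).mpr hQ⟩)
    · intro h hdet0
      obtain ⟨v, hv, hv0⟩ := Matrix.exists_mulVec_eq_zero_iff.mpr hdet0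
      exact h v hv ((gram_zero_iff A C T hT v).mp hv0)
  have hrank : (Matrix.of fun (ij : Fin n × Fin m) (k : Fin n) =>
        (C * A ^ (ij.1 : ℕ)) ij.2 k).rank = n ↔
      ∀ x : Fin n → ℝ, x ≠ 0 → ¬ (∀ k < n, C.mulVec ((A ^ k).mulVec x) = 0) := by
    set O : Matrix (Fin n × Fin m) (Fin n) ℝ :=
      Matrix.of fun (ij : Fin n × Fin m) (k : Fin n) => (C * A ^ (ij.1 : ℕ)) ij.2 k with hO
    have hker : ∀ x : Fin n → ℝ,
        (O.mulVec x = 0 ↔ ∀ k < n, C.mulVec ((A ^ k).mulVec x) = 0) := by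
      intro x
      have hentry : ∀ (i : Fin n) (j : Fin m),
          O.mulVec x (i, j) = C.mulVec ((A ^ (i : ℕ)).mulVec x) j := by
        intro i j
        rw [Matrix.mulVec_mulVec]
        simp [hO, Matrix.mulVec, dotProduct]
      constructor
      · intro h k hk
        funext j
        have := congrFun h (⟨k, hk⟩, j)
        rw [hentry ⟨k, hk⟩ j] at this
        simpa using this
      · intro h
        funext ij
        obtain ⟨i, j⟩ := ij
        rw [hentry i j, h (i : ℕ) i.isLt]
        simp
    have hrn := LinearMap.finrank_range_add_finrank_ker (Matrix.mulVecLin O)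
    rw [Module.finrank_fin_fun] at hrn
    have hrdef : O.rank = Module.finrank ℝ (LinearMap.range (Matrix.mulVecLin O)) := rfl
    constructor
    · intro hr x hx hP
      have hk0 : Module.finrank ℝ (LinearMap.ker (Matrix.mulVecLin O)) = 0 := by omega
      have := Matrix.ker_mulVecLin_eq_bot_iff.mp (Submodule.finrank_eq_zero.mp hk0) x
        ((hker x).mpr hP)
      exact hx this
    · intro h
      have hbot : LinearMap.ker (Matrix.mulVecLin O) = ⊥ := by
        rw [Matrix.ker_mulVecLin_eq_bot_iff]
        intro v hv
        by_contra hv0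
        exact h v hv0 ((hker v).mp hv)
      have hk0 : Module.finrank ℝ (LinearMap.ker (Matrix.mulVecLin O)) = 0 := by
        rw [hbot]; simp
      omega
  refine ⟨?_, ?_, ?_⟩
  · rw [hobs]
    exact ⟨fun h => ⟨1, one_pos, (hgram 1 one_pos).mpr h⟩,
      fun ⟨T, hT, hU⟩ => (hgram T hT).mp hU⟩
  · rw [hobs]
    exact ⟨fun h T hT => (hgram T hT).mpr h, fun h => (hgram 1 one_pos).mp (h 1 one_pos)⟩
  · rw [hobs, hrank]
    exact forall_congr' fun x => imp_congr_right fun _ => not_congr (hQP x)
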